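/- arXiv:2601.02705 — 7 statements merged into one kernel-verified Lean document; each statement's English description precedes it below -/
import Mathlib

section
/- Let λ₁, μ₁, λ₂, μ₂ > 0, ρ₁ = λ₁/μ₁, ρ₂ = λ₂/μ₂, ρ₁₂ = λ₁/μ₂, with ρ₂ < 1, and let 1 ≤ ℓ_d < ℓ_u be integers. Define π on the state space S = ({0,…,ℓ_u}×{1}) ∪ ({ℓ_d, ℓ_d+1,…}×{2}) by: π(ℓ,1) = ρ₁^ℓ π₀ for 0 ≤ ℓ ≤ ℓ_d−1; π(ℓ,1) = ((φ(ℓ_u) − φ(ℓ−1))/φ(ℓ_u−ℓ_d+1)) π₀ for ℓ_d ≤ ℓ ≤ ℓ_u; π(ℓ,2) = (ρ₁^{ℓ_u}/φ(ℓ_u−ℓ_d+1))·((1 − ρ₂^{ℓ−ℓ_d+1})/(1−ρ₂))·ρ₁₂ π₀ for ℓ_d ≤ ℓ ≤ ℓ_u; π(ℓ,2) = (ρ₁^{ℓ_u}/φ(ℓ_u−ℓ_d+1))·((1 − ρ₂^{ℓ_u−ℓ_d+2})/(1−ρ₂))·ρ₁₂·ρ₂^{ℓ−ℓ_u−1} π₀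 for ℓ ≥ ℓ_u+1, where φ(i)=Σ_{j=0}^i ρ₁^j and π₀ > 0. Then π satisfies the interior balance equation (λ_k + μ_k) π(ℓ,k) = λ_k π(ℓ−1,k) + μ_k π(ℓ+1,k) for all interior states, i.e., for (ℓ,1) with 1 ≤ ℓ ≤ ℓ_u − 1, ℓ ≠ ℓ_d − 1, and for (ℓ,2) with ℓ ≥ ℓ_d+1, ℓ ≠ ℓ_u+1. -/
/-- Geometric partial sum `φ(i) = Σ_{j=0}^i ρ₁^j`. -/
def geomPhi (ρ₁ : ℝ) (i : ℕ) : ℝ := ∑ j ∈ Finset.range (i + 1), ρ₁ ^ j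

/-- The explicit stationary distribution of the history-dependent two-level
M/M/1 queue; `statPi ρ₁ ρ₂ ρ₁₂ π₀ ℓd ℓu ℓ k` is `π(ℓ,k)` for `k = 1, 2`. -/
noncomputable def statPi (ρ₁ ρ₂ ρ₁₂ π₀ : ℝ) (ℓd ℓu : ℕ) (ℓ k : ℕ) : ℝ :=
  if k = 1 then
    (if ℓ < ℓd then ρ₁ ^ ℓ * π₀
     else (geomPhi ρ₁ ℓu - geomPhi ρ₁ (ℓ - 1)) / geomPhi ρ₁ (ℓu - ℓd + 1) * π₀)
  else
    (if ℓ ≤ ℓu then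
       ρ₁ ^ ℓu / geomPhi ρ₁ (ℓu - ℓd + 1) *
         ((1 - ρ₂ ^ (ℓ - ℓd + 1)) / (1 - ρ₂)) * ρ₁₂ * π₀
     else
       ρ₁ ^ ℓu / geomPhi ρ₁ (ℓu - ℓd + 1) *
         ((1 - ρ₂ ^ (ℓu - ℓd + 2)) / (1 - ρ₂)) * ρ₁₂ * ρ₂ ^ (ℓ - ℓu - 1) * π₀)

lemma geomPhi_zero (ρ : ℝ) : geomPhi ρ 0 = 1 := by simp [geomPhi]

lemma geomPhi_succ (ρ : ℝ) (n : ℕ) : geomPhi ρ (n + 1) = geomPhi ρ n + ρ ^ (n + 1) := by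
  simp [geomPhi, Finset.sum_range_succ]

lemma phi_mul (ρ : ℝ) (a b : ℕ) :
    ρ ^ (a + 1) * geomPhi ρ b = geomPhi ρ (a + 1 + b) - geomPhi ρ a := by
  induction b with
  | zero => simp [geomPhi_zero, geomPhi_succ]
  | succ n ih =>
      rw [geomPhi_succ, mul_add, ih, ← pow_add,
        show a + 1 + (n + 1) = (a + 1 + n) + 1 from rfl, geomPhi_succ]
      ring

lemma phi_rec (ρ : ℝ) (n : ℕ) : ρ * geomPhi ρ n = geomPhi ρ (n + 1) - 1 := by
  have := phi_mul ρ 0 n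
  simpa [geomPhi_zero, Nat.add_comm] using this

lemma geomPhi_pos {ρ : ℝ} (h : 0 < ρ) (n : ℕ) : 0 < geomPhi ρ n :=
  Finset.sum_pos (fun j _ => pow_pos h j)
    (Finset.nonempty_range_iff.mpr (Nat.succ_ne_zero n))

lemma statPi_one_lt (ρ₁ ρ₂ ρ₁₂ π₀ : ℝ) (ℓd ℓu ℓ : ℕ) (h : ℓ < ℓd) :
    statPi ρ₁ ρ₂ ρ₁₂ π₀ ℓd ℓu ℓ 1 = ρ₁ ^ ℓ * π₀ := by
  simp only [statPi, reduceIte, if_pos h]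

lemma statPi_one_ge (ρ₁ ρ₂ ρ₁₂ π₀ : ℝ) (ℓd ℓu ℓ : ℕ) (h : ℓd ≤ ℓ) :
    statPi ρ₁ ρ₂ ρ₁₂ π₀ ℓd ℓu ℓ 1 =
      (geomPhi ρ₁ ℓu - geomPhi ρ₁ (ℓ - 1)) / geomPhi ρ₁ (ℓu - ℓd + 1) * π₀ := by
  simp only [statPi, reduceIte, if_neg (not_lt.mpr h)]

lemma statPi_two_gt (ρ₁ ρ₂ ρ₁₂ π₀ : ℝ) (ℓd ℓu ℓ : ℕ) (h : ℓu < ℓ) :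
    statPi ρ₁ ρ₂ ρ₁₂ π₀ ℓd ℓu ℓ 2 =
      ρ₁ ^ ℓu / geomPhi ρ₁ (ℓu - ℓd + 1) *
        ((1 - ρ₂ ^ (ℓu - ℓd + 2)) / (1 - ρ₂)) * ρ₁₂ * ρ₂ ^ (ℓ - ℓu - 1) * π₀ := by
  simp only [statPi, if_neg (by norm_num : (2:ℕ) ≠ 1), if_neg (not_le.mpr h)]

lemma statPi_two (ρ₁ ρ₂ ρ₁₂ π₀ : ℝ) (ℓd ℓu ℓ : ℕ) (hd : ℓd ≤ ℓu) (h : ℓ ≤ ℓu + 1) :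
    statPi ρ₁ ρ₂ ρ₁₂ π₀ ℓd ℓu ℓ 2 =
      ρ₁ ^ ℓu / geomPhi ρ₁ (ℓu - ℓd + 1) *
        ((1 - ρ₂ ^ (ℓ - ℓd + 1)) / (1 - ρ₂)) * ρ₁₂ * π₀ := by
  simp only [statPi, if_neg (by norm_num : (2:ℕ) ≠ 1)]
  by_cases h2 : ℓ ≤ ℓu
  · rw [if_pos h2]
  · rw [if_neg h2]
    have hℓ : ℓ = ℓu + 1 := by omega
    subst hℓ
    rw [show ℓu + 1 - ℓu - 1 = 0 by omega, pow_zero, mul_one,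
      show ℓu - ℓd + 2 = ℓu + 1 - ℓd + 1 by omega]

theorem interior_balance (lam₁ mu₁ lam₂ mu₂ ρ₁ ρ₂ ρ₁₂ π₀ : ℝ)
    (hlam₁ : 0 < lam₁) (hmu₁ : 0 < mu₁) (hlam₂ : 0 < lam₂) (hmu₂ : 0 < mu₂)
    (hρ₁ : ρ₁ = lam₁ / mu₁) (hρ₂ : ρ₂ = lam₂ / mu₂) (hρ₁₂ : ρ₁₂ = lam₁ / mu₂)
    (hstab : ρ₂ < 1) (ℓd ℓu : ℕ) (hd : 1 ≤ ℓd) (hdu : ℓd < ℓu) (hπ₀ : 0 < π₀) :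
    (∀ ℓ : ℕ, 1 ≤ ℓ → ℓ ≤ ℓu - 1 → ℓ ≠ ℓd - 1 →
      (lam₁ + mu₁) * statPi ρ₁ ρ₂ ρ₁₂ π₀ ℓd ℓu ℓ 1 =
        lam₁ * statPi ρ₁ ρ₂ ρ₁₂ π₀ ℓd ℓu (ℓ - 1) 1 +
          mu₁ * statPi ρ₁ ρ₂ ρ₁₂ π₀ ℓd ℓu (ℓ + 1) 1) ∧
    (∀ ℓ : ℕ, ℓd + 1 ≤ ℓ → ℓ ≠ ℓu + 1 →
      (lam₂ + mu₂) * statPi ρ₁ ρ₂ ρ₁₂ π₀ ℓd ℓu ℓ 2 =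
        lam₂ * statPi ρ₁ ρ₂ ρ₁₂ π₀ ℓd ℓu (ℓ - 1) 2 +
          mu₂ * statPi ρ₁ ρ₂ ρ₁₂ π₀ ℓd ℓu (ℓ + 1) 2) := by
  have hmu₁' : (mu₁ : ℝ) ≠ 0 := ne_of_gt hmu₁
  have hmu₂' : (mu₂ : ℝ) ≠ 0 := ne_of_gt hmu₂
  have hL1 : lam₁ = ρ₁ * mu₁ := by rw [hρ₁]; field_simp
  have hL2 : lam₂ = ρ₂ * mu₂ := by rw [hρ₂]; field_simp
  have hρ₁pos : 0 < ρ₁ := by rw [hρ₁]; positivity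
  have hC : geomPhi ρ₁ (ℓu - ℓd + 1) ≠ 0 := ne_of_gt (geomPhi_pos hρ₁pos _)
  have hr : (1 : ℝ) - ρ₂ ≠ 0 := by
    intro h; apply absurd hstab; simp [show ρ₂ = 1 by linarith]
  constructor
  · intro ℓ h1 h2 h3
    by_cases hc : ℓ < ℓd
    · -- ℓ ≤ ℓd - 2 : all three states in the first branch
      rw [statPi_one_lt ρ₁ ρ₂ ρ₁₂ π₀ ℓd ℓu ℓ hc,
        statPi_one_lt ρ₁ ρ₂ ρ₁₂ π₀ ℓd ℓu (ℓ - 1) (by omega),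
        statPi_one_lt ρ₁ ρ₂ ρ₁₂ π₀ ℓd ℓu (ℓ + 1) (by omega)]
      obtain ⟨m, rfl⟩ : ∃ m, ℓ = m + 1 := ⟨ℓ - 1, by omega⟩
      rw [Nat.add_sub_cancel, hL1]
      ring
    · push_neg at hc
      by_cases hc2 : ℓ = ℓd
      · -- boundary case ℓ = ℓd
        subst hc2
        rw [statPi_one_ge ρ₁ ρ₂ ρ₁₂ π₀ ℓ ℓu ℓ le_rfl,
          statPi_one_lt ρ₁ ρ₂ ρ₁₂ π₀ ℓ ℓu (ℓ - 1) (by omega),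
          statPi_one_ge ρ₁ ρ₂ ρ₁₂ π₀ ℓ ℓu (ℓ + 1) (by omega)]
        obtain ⟨d, rfl⟩ : ∃ d, ℓ = d + 1 := ⟨ℓ - 1, by omega⟩
        obtain ⟨e, rfl⟩ : ∃ e, ℓu = d + 1 + (e + 1) := ⟨ℓu - (d + 1) - 1, by omega⟩
        rw [show d + 1 + (e + 1) - (d + 1) + 1 = e + 2 by omega,
          Nat.add_sub_cancel, Nat.add_sub_cancel]
        have hX : geomPhi ρ₁ (d + 1 + (e + 1)) =
            geomPhi ρ₁ d + ρ₁ ^ (d + 1) * geomPhi ρ₁ (e + 1) := by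
          rw [phi_mul]; ring
        have hCe : geomPhi ρ₁ (e + 2) ≠ 0 := ne_of_gt (geomPhi_pos hρ₁pos _)
        have hrel : geomPhi ρ₁ (e + 2) = ρ₁ * geomPhi ρ₁ (e + 1) + 1 := by
          rw [phi_rec]; ring
        rw [hX, geomPhi_succ ρ₁ d, hrel, hL1]
        have hC2 : ρ₁ * geomPhi ρ₁ (e + 1) + 1 ≠ 0 := by rw [← hrel]; exact hCe
        field_simp
        ring
      · -- interior case ℓd < ℓ : all three states in the second branch
        rw [statPi_one_ge ρ₁ ρ₂ ρ₁₂ π₀ ℓd ℓu ℓ hc,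
          statPi_one_ge ρ₁ ρ₂ ρ₁₂ π₀ ℓd ℓu (ℓ - 1) (by omega),
          statPi_one_ge ρ₁ ρ₂ ρ₁₂ π₀ ℓd ℓu (ℓ + 1) (by omega)]
        obtain ⟨n, rfl⟩ : ∃ n, ℓ = n + 2 := ⟨ℓ - 2, by omega⟩
        rw [show n + 2 - 1 - 1 = n by omega, show n + 2 - 1 = n + 1 by omega,
          show n + 2 + 1 - 1 = n + 1 + 1 by omega,
          geomPhi_succ ρ₁ (n + 1), geomPhi_succ ρ₁ n, hL1]
        field_simp
        ring
  · intro ℓ h1 h2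
    have hdu' : ℓd ≤ ℓu := le_of_lt hdu
    by_cases hcase : ℓ ≤ ℓu
    · -- ℓd + 1 ≤ ℓ ≤ ℓu
      rw [statPi_two ρ₁ ρ₂ ρ₁₂ π₀ ℓd ℓu ℓ hdu' (by omega),
        statPi_two ρ₁ ρ₂ ρ₁₂ π₀ ℓd ℓu (ℓ - 1) hdu' (by omega),
        statPi_two ρ₁ ρ₂ ρ₁₂ π₀ ℓd ℓu (ℓ + 1) hdu' (by omega)]
      obtain ⟨t, rfl⟩ : ∃ t, ℓ = ℓd + 1 + t := ⟨ℓ - ℓd - 1, by omega⟩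
      rw [show ℓd + 1 + t - ℓd + 1 = t + 2 by omega,
        show ℓd + 1 + t - 1 - ℓd + 1 = t + 1 by omega,
        show ℓd + 1 + t + 1 - ℓd + 1 = t + 3 by omega, hL2]
      field_simp
      ring
    · -- ℓ ≥ ℓu + 2
      rw [statPi_two_gt ρ₁ ρ₂ ρ₁₂ π₀ ℓd ℓu ℓ (by omega),
        statPi_two_gt ρ₁ ρ₂ ρ₁₂ π₀ ℓd ℓu (ℓ - 1) (by omega),
        statPi_two_gt ρ₁ ρ₂ ρ₁₂ π₀ ℓd ℓu (ℓ + 1) (by omega)]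
      obtain ⟨m, rfl⟩ : ∃ m, ℓ = ℓu + 2 + m := ⟨ℓ - ℓu - 2, by omega⟩
      rw [show ℓu + 2 + m - ℓu - 1 = m + 1 by omega,
        show ℓu + 2 + m - 1 - ℓu - 1 = m by omega,
        show ℓu + 2 + m + 1 - ℓu - 1 = m + 2 by omega, hL2]
      field_simp
      ring
end

section
/- With π as in the explicit stationary distribution of the history-dependent two-level M/M/1 queue, the boundary equation at (ℓ_u,1) holds: (λ₁+μ₁) π(ℓ_u,1) = λ₁ π(ℓ_u−1,1), where π(ℓ,1) = ((φ(ℓ_u) − φ(ℓ−1))/φ(ℓ_u−ℓ_d+1)) π₀ for ℓ_d ≤ ℓ ≤ ℓ_u and φ(i) = Σ_{j=0}^i ρ₁^j with ρ₁ = λ₁/μ₁. -/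
open Finset

/-- Only the top one or two terms of the geometric sums survive the differences, and `μ ρ = λ`
turns `μ ρ^(n+1)` into `λ ρ^n`. -/
theorem geom_sum_diff_balance {lam mu ρ : ℝ} (hρ : mu * ρ = lam) (n : ℕ) :
    (lam + mu) * (∑ j ∈ range (n + 2), ρ ^ j - ∑ j ∈ range (n + 1), ρ ^ j) =
      lam * (∑ j ∈ range (n + 2), ρ ^ j - ∑ j ∈ range n, ρ ^ j) := by
  simp only [sum_range_succ, add_sub_cancel_left]
  linear_combination ρ ^ n * hρ

theorem boundary_balance_lu_general (lam₁ mu₁ ρ₁ π₀ : ℝ)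
    (hmu₁ : 0 < mu₁) (hρ₁ : ρ₁ = lam₁ / mu₁)
    (ℓd ℓu : ℕ) (hd : 1 ≤ ℓd) (hdu : ℓd < ℓu)
    (φ : ℕ → ℝ) (hφ : ∀ i, φ i = ∑ j ∈ Finset.range (i + 1), ρ₁ ^ j) :
    (lam₁ + mu₁) * ((φ ℓu - φ (ℓu - 1)) / φ (ℓu - ℓd + 1) * π₀) =
      lam₁ * ((φ ℓu - φ (ℓu - 1 - 1)) / φ (ℓu - ℓd + 1) * π₀) := by
  obtain ⟨n, rfl⟩ : ∃ n, ℓu = n + 2 := ⟨ℓu - 2, by omega⟩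
  have hρ : mu₁ * ρ₁ = lam₁ := by rw [hρ₁, mul_div_cancel₀ _ hmu₁.ne']
  rw [show n + 2 - 1 = n + 1 by omega, show n + 1 - 1 = n by omega,
    hφ (n + 2), hφ (n + 1), hφ n]
  linear_combination π₀ / φ (n + 2 - ℓd + 1) * geom_sum_diff_balance hρ (n + 1)

theorem boundary_balance_lu (lam₁ mu₁ ρ₁ π₀ : ℝ)
    (hlam₁ : 0 < lam₁) (hmu₁ : 0 < mu₁) (hρ₁ : ρ₁ = lam₁ / mu₁) (hπ₀ : 0 < π₀)
    (ℓd ℓu : ℕ) (hd : 1 ≤ ℓd) (hdu : ℓd < ℓu)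
    (φ : ℕ → ℝ) (hφ : ∀ i, φ i = ∑ j ∈ Finset.range (i + 1), ρ₁ ^ j) :
    (lam₁ + mu₁) * ((φ ℓu - φ (ℓu - 1)) / φ (ℓu - ℓd + 1) * π₀) =
      lam₁ * ((φ ℓu - φ (ℓu - 1 - 1)) / φ (ℓu - ℓd + 1) * π₀) :=
  boundary_balance_lu_general lam₁ mu₁ ρ₁ π₀ hmu₁ hρ₁ ℓd ℓu hd hdu φ hφ
end

section
/- With π given by the explicit stationary distribution formulas, the boundary equation at (ℓ_u+1,2) holds: (λ₂+μ₂) π(ℓ_u+1,2) = λ₂ π(ℓ_u,2) + μ₂ π(ℓ_u+2,2) + λ₁ π(ℓ_u,1), where π(ℓ_u,1) = (ρ₁^{ℓ_u}/φ(ℓ_u−ℓ_d+1)) π₀, π(ℓ_u,2) = (ρ₁^{ℓ_u}/φ(ℓ_u−ℓ_d+1))·((1−ρ₂^{ℓ_u−ℓ_d+1})/(1−ρ₂))·ρ₁₂ π₀, and π(ℓ,2) = (ρ₁^{ℓ_u}/φ(ℓ_u−ℓ_d+1))·((1−ρ₂^{ℓ_u−ℓ_d+2})/(1−ρ₂))·ρ₁₂·ρ₂^{ℓ−ℓ_u−1}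 π₀ for ℓ ≥ ℓ_u+1. -/
theorem boundary_balance_lu_plus_one (lam₁ mu₁ lam₂ mu₂ ρ₁ ρ₂ ρ₁₂ π₀ : ℝ)
    (hlam₁ : 0 < lam₁) (hmu₁ : 0 < mu₁) (hlam₂ : 0 < lam₂) (hmu₂ : 0 < mu₂)
    (hρ₁ : ρ₁ = lam₁ / mu₁) (hρ₂ : ρ₂ = lam₂ / mu₂) (hstab : ρ₂ < 1)
    (hρ₁₂ : ρ₁₂ = lam₁ / mu₂) (ℓd ℓu : ℕ) (hd : 1 ≤ ℓd) (hdu : ℓd < ℓu) (hπ₀ : 0 < π₀)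
    (φ : ℕ → ℝ) (hφ : ∀ i, φ i = ∑ j ∈ Finset.range (i + 1), ρ₁ ^ j) :
    (lam₂ + mu₂) *
        (ρ₁ ^ ℓu / φ (ℓu - ℓd + 1) * ((1 - ρ₂ ^ (ℓu - ℓd + 2)) / (1 - ρ₂)) * ρ₁₂ *
          ρ₂ ^ (0 : ℕ) * π₀) =
      lam₂ * (ρ₁ ^ ℓu / φ (ℓu - ℓd + 1) * ((1 - ρ₂ ^ (ℓu - ℓd + 1)) / (1 - ρ₂)) * ρ₁₂ * π₀) +
        mu₂ * (ρ₁ ^ ℓu / φ (ℓu - ℓd + 1) * ((1 - ρ₂ ^ (ℓu - ℓd + 2)) / (1 - ρ₂)) * ρ₁₂ *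
          ρ₂ ^ (1 : ℕ) * π₀) +
        lam₁ * (ρ₁ ^ ℓu / φ (ℓu - ℓd + 1) * π₀) := by
  have hone : (1 : ℝ) - ρ₂ ≠ 0 := sub_ne_zero.mpr (ne_of_gt hstab)
  have hmu : mu₂ ≠ 0 := ne_of_gt hmu₂
  set n := ℓu - ℓd with hn
  have key : (lam₂ + mu₂) * ((1 - ρ₂ ^ (n + 2)) / (1 - ρ₂)) * ρ₁₂ =
      lam₂ * ((1 - ρ₂ ^ (n + 1)) / (1 - ρ₂)) * ρ₁₂ +
        mu₂ * ((1 - ρ₂ ^ (n + 2)) / (1 - ρ₂)) * ρ₁₂ * ρ₂ + lam₁ := by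
    have hl2 : lam₂ = ρ₂ * mu₂ := by rw [hρ₂]; field_simp
    have hl1 : lam₁ = ρ₁₂ * mu₂ := by rw [hρ₁₂]; field_simp
    field_simp
    linear_combination ((1 - ρ₂) * ρ₁₂ * (ρ₂ ^ (n + 1) - ρ₂ ^ (n + 2))) * hl2 -
      ((1 - ρ₂) * (1 - ρ₂)) * hl1 +
      (ρ₂ ^ (n + 2) * ρ₁₂ * (1 - ρ₂)) * hl2 - (ρ₂ * (1 - ρ₂)) * hl1
  linear_combination (ρ₁ ^ ℓu / φ (n + 1) * π₀) * key
end

section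
/- With π given by the explicit stationary distribution formulas, the boundary equation at (ℓ_d−1,1) holds: (λ₁+μ₁) π(ℓ_d−1,1) = λ₁ π(ℓ_d−2,1) + μ₁ π(ℓ_d,1) + μ₂ π(ℓ_d,2), where π(ℓ,1) = ρ₁^ℓ π₀ for 0 ≤ ℓ ≤ ℓ_d−1, π(ℓ_d,1) = ((φ(ℓ_u) − φ(ℓ_d−1))/φ(ℓ_u−ℓ_d+1)) π₀, and π(ℓ_d,2) = (ρ₁^{ℓ_u}/φ(ℓ_u−ℓ_d+1))·ρ₁₂ π₀. -/
lemma sum_pow_split (x : ℝ) (n p : ℕ) :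
    (∑ j ∈ Finset.range (n + p), x ^ j) =
      (∑ j ∈ Finset.range n, x ^ j) + x ^ n * ∑ j ∈ Finset.range p, x ^ j := by
  rw [Finset.sum_range_add, Finset.mul_sum]
  simp [pow_add]

theorem boundary_balance_ld_minus_one (lam₁ mu₁ lam₂ mu₂ ρ₁ ρ₂ ρ₁₂ π₀ : ℝ)
    (hlam₁ : 0 < lam₁) (hmu₁ : 0 < mu₁) (hlam₂ : 0 < lam₂) (hmu₂ : 0 < mu₂)
    (hρ₁ : ρ₁ = lam₁ / mu₁) (hρ₂ : ρ₂ = lam₂ / mu₂) (hstab : ρ₂ < 1)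
    (hρ₁₂ : ρ₁₂ = lam₁ / mu₂) (ℓd ℓu : ℕ) (hd : 2 ≤ ℓd) (hdu : ℓd < ℓu) (hπ₀ : 0 < π₀)
    (φ : ℕ → ℝ) (hφ : ∀ i, φ i = ∑ j ∈ Finset.range (i + 1), ρ₁ ^ j) :
    (lam₁ + mu₁) * (ρ₁ ^ (ℓd - 1) * π₀) =
      lam₁ * (ρ₁ ^ (ℓd - 2) * π₀) +
        mu₁ * ((φ ℓu - φ (ℓd - 1)) / φ (ℓu - ℓd + 1) * π₀) +
        mu₂ * (ρ₁ ^ ℓu / φ (ℓu - ℓd + 1) * ρ₁₂ * π₀) := by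
  have hρ₁pos : 0 < ρ₁ := by rw [hρ₁]; positivity
  obtain ⟨a, rfl⟩ := Nat.exists_eq_add_of_le hd
  obtain ⟨m, rfl⟩ := Nat.exists_eq_add_of_lt hdu
  -- ℓd = 2 + a, ℓu = 2 + a + m + 1
  have h1 : 2 + a - 1 = a + 1 := by omega
  have h2 : 2 + a - 2 = a := by omega
  have h3 : 2 + a + m + 1 - (2 + a) + 1 = m + 2 := by omega
  rw [h1, h2, h3]
  have hΦpos : 0 < φ (m + 2) := by
    rw [hφ]
    apply Finset.sum_pos
    · intro i _; positivity
    · exact ⟨0, by simp⟩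
  have hΦ : φ (m + 2) ≠ 0 := ne_of_gt hΦpos
  -- φ(ℓu) - φ(a+1) = ρ₁^(a+2) * (sum over range (m+2))
  have hdiff : φ (2 + a + m + 1) - φ (a + 1) = ρ₁ ^ (a + 2) * φ (m + 1) := by
    rw [hφ, hφ, hφ]
    have : 2 + a + m + 1 + 1 = (a + 2) + (m + 2) := by ring
    rw [this, sum_pow_split]
    have e : m + 1 + 1 = m + 2 := by ring
    rw [e]; ring
  rw [hdiff]
  have hmu₁' : (mu₁ : ℝ) ≠ 0 := ne_of_gt hmu₁
  have hmu₂' : (mu₂ : ℝ) ≠ 0 := ne_of_gt hmu₂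
  -- reduce to an identity after clearing denominators
  have hΦstep : φ (m + 2) = φ (m + 1) + ρ₁ ^ (m + 2) := by
    rw [hφ, hφ, Finset.sum_range_succ]
  have hlam : lam₁ = ρ₁ * mu₁ := by
    rw [hρ₁]; field_simp
  have h12 : ρ₁₂ = ρ₁ * mu₁ / mu₂ := by
    rw [hρ₁₂, hlam]
  rw [hΦstep] at hΦ ⊢
  rw [hlam, h12]
  field_simp
  ring
end

section
/- Under ρ₂ < 1 and ρ₁ ≠ 1, the total mass of the explicit stationary distribution equals π₀ times the quantity 1/(1−ρ₁) − ρ₁^{ℓ_u+1}(ℓ_u−ℓ_d+2)/(1−ρ₁^{ℓ_u−ℓ_d+2}) + ρ₁₂(ρ₁^{ℓ_u}−ρ₁^{ℓ_u+1})(ℓ_u−ℓ_d+2)/((1−ρ₁^{ℓ_u−ℓ_d+2})(1−ρ₂)). That is, Σ_{ℓ=0}^{ℓ_d−1} ρ₁^ℓ + Σ_{ℓ=ℓ_d}^{ℓ_u} (ρ₁^ℓ−ρ₁^{ℓ_u+1})/(1−ρ₁^{ℓ_u−ℓ_d+2}) + Σ_{ℓ=ℓ_d}^{ℓ_u} ((ρ₁^{ℓ_u}−ρ₁^{ℓ_u+1})/(1−ρ₁^{ℓ_u−ℓ_d+2}))·ρ₁₂·(1−ρ₂^{ℓ−ℓ_d+1})/(1−ρ₂)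 + Σ_{ℓ=ℓ_u+1}^{∞} ((ρ₁^{ℓ_u}−ρ₁^{ℓ_u+1})/(1−ρ₁^{ℓ_u−ℓ_d+2}))·ρ₁₂·((1−ρ₂^{ℓ_u−ℓ_d+2})/(1−ρ₂))·ρ₂^{ℓ−ℓ_u−1} equals the displayed quantity. -/
set_option maxHeartbeats 1000000 in

theorem total_mass_rho_ne_one (ρ₁ ρ₂ ρ₁₂ : ℝ)
    (hρ₁ : 0 < ρ₁) (hρ₁1 : ρ₁ ≠ 1) (hρ₂0 : 0 < ρ₂) (hρ₂1 : ρ₂ < 1) (hρ₁₂ : 0 < ρ₁₂)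
    (ℓd ℓu : ℕ) (hd : 1 ≤ ℓd) (hdu : ℓd < ℓu) :
    (∑ ℓ ∈ Finset.range ℓd, ρ₁ ^ ℓ) +
      (∑ ℓ ∈ Finset.Icc ℓd ℓu, (ρ₁ ^ ℓ - ρ₁ ^ (ℓu + 1)) / (1 - ρ₁ ^ (ℓu - ℓd + 2))) +
      (∑ ℓ ∈ Finset.Icc ℓd ℓu,
        (ρ₁ ^ ℓu - ρ₁ ^ (ℓu + 1)) / (1 - ρ₁ ^ (ℓu - ℓd + 2)) * ρ₁₂ *
          ((1 - ρ₂ ^ (ℓ - ℓd + 1)) / (1 - ρ₂))) +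
      (∑' m : ℕ,
        (ρ₁ ^ ℓu - ρ₁ ^ (ℓu + 1)) / (1 - ρ₁ ^ (ℓu - ℓd + 2)) * ρ₁₂ *
          ((1 - ρ₂ ^ (ℓu - ℓd + 2)) / (1 - ρ₂)) * ρ₂ ^ m) =
    1 / (1 - ρ₁) -
      ρ₁ ^ (ℓu + 1) * ((ℓu : ℝ) - (ℓd : ℝ) + 2) / (1 - ρ₁ ^ (ℓu - ℓd + 2)) +
      ρ₁₂ * (ρ₁ ^ ℓu - ρ₁ ^ (ℓu + 1)) * ((ℓu : ℝ) - (ℓd : ℝ) + 2) /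
        ((1 - ρ₁ ^ (ℓu - ℓd + 2)) * (1 - ρ₂)) := by
  obtain ⟨k, rfl⟩ : ∃ k, ℓu = ℓd + k := ⟨ℓu - ℓd, by omega⟩
  have hk : ℓd + k - ℓd = k := by omega
  rw [hk]
  have h1 : (1 : ℝ) - ρ₁ ≠ 0 := sub_ne_zero.mpr (Ne.symm hρ₁1)
  have h2 : (1 : ℝ) - ρ₂ ≠ 0 := sub_ne_zero.mpr (by linarith)
  have h1' : ρ₁ - 1 ≠ 0 := sub_ne_zero.mpr hρ₁1
  have h2' : ρ₂ - 1 ≠ 0 := sub_ne_zero.mpr hρ₂1.ne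
  have hD : (1 : ℝ) - ρ₁ ^ (k + 2) ≠ 0 := by
    refine sub_ne_zero.mpr (Ne.symm ?_)
    rcases lt_or_gt_of_ne hρ₁1 with h | h
    · exact ne_of_lt (pow_lt_one₀ hρ₁.le h (Nat.succ_ne_zero _))
    · exact ne_of_gt (one_lt_pow₀ h (Nat.succ_ne_zero _))
  simp only [← Finset.Ico_add_one_right_eq_Icc, Finset.sum_Ico_eq_sum_range]
  have hkk : ℓd + k + 1 - ℓd = k + 1 := by omega
  rw [hkk]
  have e1 : ∑ ℓ ∈ Finset.range ℓd, ρ₁ ^ ℓ = (ρ₁ ^ ℓd - 1) / (ρ₁ - 1) := geom_sum_eq hρ₁1 _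
  have e2 : ∑ j ∈ Finset.range (k + 1), (ρ₁ ^ (ℓd + j) - ρ₁ ^ (ℓd + k + 1)) / (1 - ρ₁ ^ (k + 2))
      = (ρ₁ ^ ℓd * ((ρ₁ ^ (k + 1) - 1) / (ρ₁ - 1)) - (k + 1) * ρ₁ ^ (ℓd + k + 1)) / (1 - ρ₁ ^ (k + 2)) := by
    rw [← Finset.sum_div, Finset.sum_sub_distrib, Finset.sum_const, Finset.card_range]
    simp only [pow_add, ← Finset.mul_sum, geom_sum_eq hρ₁1]
    ring_nf
  have e3 : ∑ j ∈ Finset.range (k + 1),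
      (ρ₁ ^ (ℓd + k) - ρ₁ ^ (ℓd + k + 1)) / (1 - ρ₁ ^ (k + 2)) * ρ₁₂ *
        ((1 - ρ₂ ^ (ℓd + j - ℓd + 1)) / (1 - ρ₂))
      = (ρ₁ ^ (ℓd + k) - ρ₁ ^ (ℓd + k + 1)) / (1 - ρ₁ ^ (k + 2)) * ρ₁₂ *
        (((k + 1) - ρ₂ * ((ρ₂ ^ (k + 1) - 1) / (ρ₂ - 1))) / (1 - ρ₂)) := by
    simp only [Nat.add_sub_cancel_left, ← Finset.mul_sum, Finset.sum_div]
    rw [← Finset.sum_div, Finset.sum_sub_distrib, Finset.sum_const, Finset.card_range]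
    simp only [pow_succ', ← Finset.mul_sum, geom_sum_eq hρ₂1.ne]
    push_cast
    ring_nf
  have e4 : ∑' m : ℕ,
      (ρ₁ ^ (ℓd + k) - ρ₁ ^ (ℓd + k + 1)) / (1 - ρ₁ ^ (k + 2)) * ρ₁₂ *
        ((1 - ρ₂ ^ (k + 2)) / (1 - ρ₂)) * ρ₂ ^ m
      = (ρ₁ ^ (ℓd + k) - ρ₁ ^ (ℓd + k + 1)) / (1 - ρ₁ ^ (k + 2)) * ρ₁₂ *
        ((1 - ρ₂ ^ (k + 2)) / (1 - ρ₂)) * (1 / (1 - ρ₂)) := by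
    rw [tsum_mul_left, tsum_geometric_of_lt_one hρ₂0.le hρ₂1]
    ring
  rw [e1, e2, e3, e4]
  have hcast : ((ℓd + k : ℕ) : ℝ) = (ℓd : ℝ) + k := by push_cast; ring
  rw [hcast]
  field_simp
  ring
end

section
/- Let b₁ ≠ 0, b₂ < 0, 0 < ℓ̃_d < ℓ̃_u, ρ̃₁₂ > 0, and let C₀ = (1 − e^{b₁(ℓ̃_u−ℓ̃_d)} + b₁(ℓ̃_u−ℓ̃_d)e^{b₁ℓ̃_u} − (b₁²/b₂)(ℓ̃_u−ℓ̃_d)ρ̃₁₂ e^{b₁ℓ̃_u})^{−1}. Define f on ℝ by f(x) = C₀b₁(e^{b₁(ℓ̃_u−ℓ̃_d)}−1)e^{b₁x} for x ∈ [0,ℓ̃_d), f(x) = C₀b₁(e^{b₁ℓ̃_u} − e^{b₁x}) + (C₀ρ̃₁₂/b₂)b₁²e^{b₁ℓ̃_u}(e^{b₂(x−ℓ̃_d)}−1) for x ∈ [ℓ̃_d,ℓ̃_u], f(x) = (C₀ρ̃₁₂(e^{b₂(ℓ̃_u−ℓ̃_d)}−1)/b₂)b₁²e^{b₁ℓ̃_u}e^{b₂(x−ℓ̃_u)}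 for x > ℓ̃_u, and f(x) = 0 for x < 0. Then ∫_ℝ f(x) dx = 1. -/
open Real MeasureTheory Set

/-! On each of the three intervals `[0, ℓ̃_d)`, `[ℓ̃_d, ℓ̃_u]`, `(ℓ̃_u, ∞)` the density is a linear
combination of exponentials, integrated in closed form (the tail converges because `b₂ < 0`).
Writing `e^{b₁ℓ̃_u} = e^{b₁(ℓ̃_u-ℓ̃_d)} e^{b₁ℓ̃_d}`, the three integrals add up to `C₀` times the
denominator defining `C₀`. -/

theorem integral_exp_mul_of_ne_zero {c : ℝ} (hc : c ≠ 0) (a b : ℝ) :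
    ∫ x in a..b, exp (c * x) = (exp (c * b) - exp (c * a)) / c := by
  rw [intervalIntegral.integral_comp_mul_left (fun x => exp x) hc, integral_exp, smul_eq_mul,
    inv_mul_eq_div]

theorem integral_exp_mul_sub_of_ne_zero {c : ℝ} (hc : c ≠ 0) (a b d : ℝ) :
    ∫ x in a..b, exp (c * (x - d)) = (exp (c * (b - d)) - exp (c * (a - d))) / c := by
  rw [intervalIntegral.integral_comp_sub_right (fun x => exp (c * x)),
    integral_exp_mul_of_ne_zero hc]

theorem exp_mul_sub (c x a : ℝ) : exp (c * (x - a)) = exp (-(c * a)) * exp (c * x) := by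
  rw [← exp_add]; ring_nf

theorem integrableOn_exp_mul_sub_Ioi {c : ℝ} (hc : c < 0) (a : ℝ) :
    IntegrableOn (fun x => exp (c * (x - a))) (Ioi a) := by
  simp_rw [exp_mul_sub]
  exact (integrableOn_exp_mul_Ioi hc a).const_mul _

theorem integral_exp_mul_sub_Ioi {c : ℝ} (hc : c < 0) (a : ℝ) :
    ∫ x in Ioi a, exp (c * (x - a)) = -c⁻¹ := by
  simp_rw [exp_mul_sub, integral_const_mul, integral_exp_mul_Ioi hc]
  rw [exp_neg]
  field_simp

theorem integral_ite_Iio_Iio_Iic {E : Type*} [NormedAddCommGroup E] [NormedSpace ℝ E]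
    {g₁ g₂ g₃ : ℝ → E} {a b c : ℝ} (hab : a ≤ b) (hbc : b ≤ c)
    (hg₁ : IntervalIntegrable g₁ volume a b) (hg₂ : IntervalIntegrable g₂ volume b c)
    (hg₃ : IntegrableOn g₃ (Ioi c)) :
    ∫ x, (if x < a then 0 else if x < b then g₁ x else if x ≤ c then g₂ x else g₃ x) =
      (∫ x in a..b, g₁ x) + (∫ x in b..c, g₂ x) + ∫ x in Ioi c, g₃ x := by
  set f : ℝ → E := fun x =>
    if x < a then 0 else if x < b then g₁ x else if x ≤ c then g₂ x else g₃ x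
  have h₁ : EqOn g₁ f (Ioo a b) := fun x hx => by simp [f, hx.2, hx.1.not_gt]
  have h₂ : EqOn g₂ f (Ioo b c) := fun x hx => by
    simp [f, hx.2.le, hx.1.not_gt, (hab.trans_lt hx.1).not_gt]
  have h₃ : EqOn g₃ f (Ioi c) := fun x hx => by
    simp [f, (hbc.trans_lt hx).not_gt, ((hab.trans hbc).trans_lt hx).not_gt, mem_Ioi.1 hx]
  have hf₁ : IntervalIntegrable f volume a b := hg₁.congr_uIoo (uIoo_of_le hab ▸ h₁)
  have hf₂ : IntervalIntegrable f volume b c := hg₂.congr_uIoo (uIoo_of_le hbc ▸ h₂)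
  have hf₃ : IntegrableOn f (Ioi c) := hg₃.congr_fun h₃ measurableSet_Ioi
  calc ∫ x, f x = ∫ x in Ioi a, f x := by
        rw [← integral_Ici_eq_integral_Ioi, setIntegral_eq_integral_of_forall_compl_eq_zero]
        intro x hx
        simp [f, notMem_Ici.1 hx]
    _ = (∫ x in a..c, f x) + ∫ x in Ioi c, f x :=
        (intervalIntegral.integral_interval_add_Ioi' (hf₁.trans hf₂) hf₃).symm
    _ = _ := by
        rw [← intervalIntegral.integral_add_adjacent_intervals hf₁ hf₂,
          intervalIntegral.integral_congr_Ioo_of_le hab h₁.symm,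
          intervalIntegral.integral_congr_Ioo_of_le hbc h₂.symm,
          setIntegral_congr_fun measurableSet_Ioi h₃.symm]

theorem limiting_density_integrates_to_one_general (b₁ b₂ ld lu ρ₁₂ C₀ : ℝ)
    (hb₁ : b₁ ≠ 0) (hb₂ : b₂ < 0) (hld : 0 < ld) (hdu : ld < lu)
    (hden : 1 - exp (b₁ * (lu - ld)) + b₁ * (lu - ld) * exp (b₁ * lu) -
        b₁ ^ 2 / b₂ * (lu - ld) * ρ₁₂ * exp (b₁ * lu) ≠ 0)
    (hC₀ : C₀ = (1 - exp (b₁ * (lu - ld)) + b₁ * (lu - ld) * exp (b₁ * lu) -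
        b₁ ^ 2 / b₂ * (lu - ld) * ρ₁₂ * exp (b₁ * lu))⁻¹)
    (f : ℝ → ℝ)
    (hf : f = fun x =>
      if x < 0 then 0
      else if x < ld then C₀ * b₁ * (exp (b₁ * (lu - ld)) - 1) * exp (b₁ * x)
      else if x ≤ lu then
        C₀ * b₁ * (exp (b₁ * lu) - exp (b₁ * x)) +
          C₀ * ρ₁₂ / b₂ * b₁ ^ 2 * exp (b₁ * lu) * (exp (b₂ * (x - ld)) - 1)
      else
        C₀ * ρ₁₂ * (exp (b₂ * (lu - ld)) - 1) / b₂ * b₁ ^ 2 * exp (b₁ * lu) *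
          exp (b₂ * (x - lu))) :
    ∫ x : ℝ, f x = 1 := by
  subst hf
  have hexp_lu : exp (b₁ * lu) = exp (b₁ * (lu - ld)) * exp (b₁ * ld) := by
    rw [← exp_add]; ring_nf
  rw [integral_ite_Iio_Iio_Iic hld.le hdu.le (Continuous.intervalIntegrable (by fun_prop) _ _)
      (Continuous.intervalIntegrable (by fun_prop) _ _)
      ((integrableOn_exp_mul_sub_Ioi hb₂ lu).const_mul _),
    intervalIntegral.integral_const_mul, integral_exp_mul_of_ne_zero hb₁, integral_const_mul,
    integral_exp_mul_sub_Ioi hb₂, intervalIntegral.integral_add,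
    intervalIntegral.integral_const_mul, intervalIntegral.integral_const_mul,
    intervalIntegral.integral_sub, intervalIntegral.integral_sub, integral_exp_mul_of_ne_zero hb₁,
    integral_exp_mul_sub_of_ne_zero hb₂.ne]
  · simp only [intervalIntegral.integral_const, smul_eq_mul, mul_zero, sub_self, exp_zero, mul_one]
    rw [hexp_lu] at hC₀ hden ⊢
    refine Eq.trans ?_ (hC₀ ▸ inv_mul_cancel₀ hden)
    field_simp
    ring
  all_goals exact (by fun_prop : Continuous _).intervalIntegrable _ _

theorem limiting_density_integrates_to_one (b₁ b₂ ld lu ρ₁₂ C₀ : ℝ)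
    (hb₁ : b₁ ≠ 0) (hb₂ : b₂ < 0) (hld : 0 < ld) (hdu : ld < lu) (hρ : 0 < ρ₁₂)
    (hden : 1 - exp (b₁ * (lu - ld)) + b₁ * (lu - ld) * exp (b₁ * lu) -
        b₁ ^ 2 / b₂ * (lu - ld) * ρ₁₂ * exp (b₁ * lu) ≠ 0)
    (hC₀ : C₀ = (1 - exp (b₁ * (lu - ld)) + b₁ * (lu - ld) * exp (b₁ * lu) -
        b₁ ^ 2 / b₂ * (lu - ld) * ρ₁₂ * exp (b₁ * lu))⁻¹)
    (f : ℝ → ℝ)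
    (hf : f = fun x =>
      if x < 0 then 0
      else if x < ld then C₀ * b₁ * (exp (b₁ * (lu - ld)) - 1) * exp (b₁ * x)
      else if x ≤ lu then
        C₀ * b₁ * (exp (b₁ * lu) - exp (b₁ * x)) +
          C₀ * ρ₁₂ / b₂ * b₁ ^ 2 * exp (b₁ * lu) * (exp (b₂ * (x - ld)) - 1)
      else
        C₀ * ρ₁₂ * (exp (b₂ * (lu - ld)) - 1) / b₂ * b₁ ^ 2 * exp (b₁ * lu) *
          exp (b₂ * (x - lu))) :
    ∫ x : ℝ, f x = 1 :=
  limiting_density_integrates_to_one_general b₁ b₂ ld lu ρ₁₂ C₀ hb₁ hb₂ hld hdu hden hC₀ f hf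
end

section
/- Let b₂ < 0, 0 < ℓ̃_d < ℓ̃_u, ρ̃₁₂ > 0, and C₀ = ((ℓ̃_u+ℓ̃_d)/2 − ρ̃₁₂/b₂)^{−1}. Define f(x) = C₀ for x ∈ [0,ℓ̃_d), f(x) = C₀(ℓ̃_u−x)/(ℓ̃_u−ℓ̃_d) + (C₀ρ̃₁₂/(b₂(ℓ̃_u−ℓ̃_d)))(e^{b₂(x−ℓ̃_d)}−1) for x ∈ [ℓ̃_d,ℓ̃_u], f(x) = (C₀ρ̃₁₂(e^{b₂(ℓ̃_u−ℓ̃_d)}−1)/(b₂(ℓ̃_u−ℓ̃_d)))e^{b₂(x−ℓ̃_u)} for x > ℓ̃_u, and f(x) = 0 otherwise. Then f is nonnegative and ∫_ℝ f(x) dx = 1. -/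
/-!
On `[0, ℓ_d]` the density is the constant `C₀`, on `[ℓ_d, ℓ_u]` a linear ramp plus a multiple of
`exp (b₂ (x - ℓ_d)) - 1`, and beyond `ℓ_u` an exponential tail. Each piece is nonnegative because
`(exp (b t) - 1) / b ≥ 0` for `t ≥ 0`. Integrating piece by piece, the term
`(exp (b₂ (ℓ_u - ℓ_d)) - 1) / b₂` produced by the ramp cancels the mass of the tail, leaving
`C₀ ((ℓ_u + ℓ_d) / 2 - ρ₁₂ / b₂) = 1`.
-/

open Real MeasureTheory Set

theorem Real.exp_mul_sub_one_div_nonneg (b : ℝ) {t : ℝ} (ht : 0 ≤ t) :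
    0 ≤ (exp (b * t) - 1) / b := by
  rcases le_or_gt b 0 with hb | hb
  · exact div_nonneg_of_nonpos
      (sub_nonpos.mpr (exp_le_one_iff.mpr (mul_nonpos_of_nonpos_of_nonneg hb ht))) hb
  · exact div_nonneg (sub_nonneg.mpr (one_le_exp (by positivity))) hb.le

theorem integral_exp_mul_sub {b : ℝ} (hb : b ≠ 0) (a c : ℝ) :
    ∫ x in a..c, exp (b * (x - a)) = (exp (b * (c - a)) - 1) / b := by
  rw [intervalIntegral.integral_comp_sub_right (fun x => exp (b * x)),
    intervalIntegral.integral_comp_mul_left (fun x => exp x) hb, integral_exp]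
  simp [div_eq_inv_mul]

theorem integrableOn_Ioi_exp_mul_sub {b : ℝ} (hb : b < 0) (c : ℝ) :
    IntegrableOn (fun x => exp (b * (x - c))) (Ioi c) := by
  simp_rw [mul_sub, exp_sub]
  exact (integrableOn_exp_mul_Ioi hb c).div_const _

theorem integral_Ioi_exp_mul_sub {b : ℝ} (hb : b < 0) (c : ℝ) :
    ∫ x in Ioi c, exp (b * (x - c)) = -b⁻¹ := by
  simp_rw [mul_sub, exp_sub]
  rw [integral_div, integral_exp_mul_Ioi hb]
  field_simp

theorem integral_eq_intervalIntegral_add_integral_Ioi {E : Type*} [NormedAddCommGroup E]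
    [NormedSpace ℝ E] {f : ℝ → E} {a b : ℝ} (hf : ∀ x < a, f x = 0)
    (hab : IntervalIntegrable f volume a b) (hb : IntegrableOn f (Ioi b)) :
    ∫ x, f x = (∫ x in a..b, f x) + ∫ x in Ioi b, f x := by
  rw [intervalIntegral.integral_interval_add_Ioi' hab hb, ← integral_Ici_eq_integral_Ioi,
    setIntegral_eq_integral_of_forall_compl_eq_zero (s := Ici a) fun x hx => hf x (not_le.mp hx)]

noncomputable def limitingDensity (b₂ ld lu ρ₁₂ C₀ : ℝ) : ℝ → ℝ := fun x =>
  if x < 0 then 0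
  else if x < ld then C₀
  else if x ≤ lu then
    C₀ * (lu - x) / (lu - ld) +
      C₀ * ρ₁₂ / (b₂ * (lu - ld)) * (exp (b₂ * (x - ld)) - 1)
  else
    C₀ * ρ₁₂ * (exp (b₂ * (lu - ld)) - 1) / (b₂ * (lu - ld)) *
      exp (b₂ * (x - lu))

namespace limitingDensity

variable {b₂ ld lu ρ₁₂ C₀ : ℝ}

local notation "f" => limitingDensity b₂ ld lu ρ₁₂ C₀

theorem eq_zero_of_neg {x : ℝ} (hx : x < 0) : f x = 0 := if_pos hx

theorem eqOn_Icc_zero_ld (hdu : ld < lu) : EqOn f (fun _ => C₀) (Icc 0 ld) := by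
  rintro x ⟨hx0, hxd⟩
  rcases hxd.lt_or_eq with hxd | rfl
  · simp [limitingDensity, hx0.not_gt, hxd]
  · simp [limitingDensity, hx0.not_gt, hdu.le, (sub_pos.mpr hdu).ne']

theorem eqOn_Icc_ld_lu (hld : 0 ≤ ld) :
    EqOn f (fun x => C₀ * (lu - x) / (lu - ld) +
      C₀ * ρ₁₂ / (b₂ * (lu - ld)) * (exp (b₂ * (x - ld)) - 1)) (Icc ld lu) := by
  rintro x ⟨hdx, hxu⟩
  simp [limitingDensity, (hld.trans hdx).not_gt, hdx.not_gt, hxu]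

theorem eqOn_Ioi_lu (hld : 0 ≤ ld) (hdu : ld ≤ lu) :
    EqOn f (fun x => C₀ * ρ₁₂ * (exp (b₂ * (lu - ld)) - 1) / (b₂ * (lu - ld)) *
      exp (b₂ * (x - lu))) (Ioi lu) := by
  intro x hx
  have hux : lu < x := hx
  simp [limitingDensity, (hld.trans (hdu.trans hux.le)).not_gt, (hdu.trans hux.le).not_gt,
    hux.not_ge]

theorem nonneg (hdu : ld ≤ lu) (hρ : 0 ≤ ρ₁₂) (hC : 0 ≤ C₀) (x : ℝ) : 0 ≤ f x := by
  have hL : 0 ≤ lu - ld := sub_nonneg.mpr hdu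
  have hexp_term : ∀ t, 0 ≤ t → 0 ≤ C₀ * ρ₁₂ / (b₂ * (lu - ld)) * (exp (b₂ * t) - 1) := by
    intro t ht
    have hfactor : C₀ * ρ₁₂ / (b₂ * (lu - ld)) * (exp (b₂ * t) - 1) =
        C₀ * ρ₁₂ / (lu - ld) * ((exp (b₂ * t) - 1) / b₂) := by
      rw [mul_comm b₂, ← div_div]; ring
    have := exp_mul_sub_one_div_nonneg b₂ ht
    rw [hfactor]
    positivity
  unfold limitingDensity
  split_ifs with h0 hd hu
  · rfl
  · exact hC
  · have : 0 ≤ lu - x := sub_nonneg.mpr hu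
    have := hexp_term (x - ld) (sub_nonneg.mpr (not_lt.mp hd))
    positivity
  · rw [mul_div_right_comm]
    have := hexp_term (lu - ld) hL
    positivity

theorem intervalIntegrable_zero_ld (hld : 0 ≤ ld) (hdu : ld < lu) :
    IntervalIntegrable f volume 0 ld :=
  (continuousOn_const.congr (eqOn_Icc_zero_ld hdu)).intervalIntegrable_of_Icc hld

theorem intervalIntegrable_ld_lu (hld : 0 ≤ ld) (hdu : ld < lu) :
    IntervalIntegrable f volume ld lu :=
  ((Continuous.continuousOn (by fun_prop)).congr (eqOn_Icc_ld_lu hld)).intervalIntegrable_of_Icc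
    hdu.le

theorem integrableOn_Ioi_lu (hb : b₂ < 0) (hld : 0 ≤ ld) (hdu : ld < lu) :
    IntegrableOn f (Ioi lu) :=
  IntegrableOn.congr_fun ((integrableOn_Ioi_exp_mul_sub hb lu).const_mul _)
    (eqOn_Ioi_lu hld hdu.le).symm measurableSet_Ioi

theorem intervalIntegral_zero_ld (hld : 0 ≤ ld) (hdu : ld < lu) :
    ∫ x in 0..ld, f x = C₀ * ld := by
  rw [intervalIntegral.integral_congr (uIcc_of_le hld ▸ eqOn_Icc_zero_ld hdu)]
  simp [mul_comm]

theorem intervalIntegral_ld_lu (hb : b₂ ≠ 0) (hld : 0 ≤ ld) (hdu : ld < lu) :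
    ∫ x in ld..lu, f x = C₀ * (lu - ld) / 2 +
      C₀ * ρ₁₂ / (b₂ * (lu - ld)) * ((exp (b₂ * (lu - ld)) - 1) / b₂ - (lu - ld)) := by
  have hL : lu - ld ≠ 0 := (sub_pos.mpr hdu).ne'
  rw [intervalIntegral.integral_congr (uIcc_of_le hdu.le ▸ eqOn_Icc_ld_lu hld),
    intervalIntegral.integral_add, intervalIntegral.integral_div,
    intervalIntegral.integral_const_mul, intervalIntegral.integral_const_mul,
    intervalIntegral.integral_sub, intervalIntegral.integral_sub, integral_exp_mul_sub hb]
  · simp only [intervalIntegral.integral_const, smul_eq_mul, integral_id, mul_one]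
    field_simp
    ring
  all_goals exact Continuous.intervalIntegrable (by fun_prop) _ _

theorem setIntegral_Ioi_lu (hb : b₂ < 0) (hld : 0 ≤ ld) (hdu : ld < lu) :
    ∫ x in Ioi lu, f x =
      -(C₀ * ρ₁₂ * (exp (b₂ * (lu - ld)) - 1) / (b₂ * (lu - ld)) * b₂⁻¹) := by
  rw [setIntegral_congr_fun measurableSet_Ioi (eqOn_Ioi_lu hld hdu.le), integral_const_mul,
    integral_Ioi_exp_mul_sub hb, mul_neg]

theorem integral_eq (hb : b₂ < 0) (hld : 0 ≤ ld) (hdu : ld < lu) :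
    ∫ x, f x = C₀ * ((lu + ld) / 2 - ρ₁₂ / b₂) := by
  have h0 : IntervalIntegrable f volume 0 ld := intervalIntegrable_zero_ld hld hdu
  have h1 : IntervalIntegrable f volume ld lu := intervalIntegrable_ld_lu hld hdu
  rw [integral_eq_intervalIntegral_add_integral_Ioi (fun _ => eq_zero_of_neg) (h0.trans h1)
      (integrableOn_Ioi_lu hb hld hdu), ← intervalIntegral.integral_add_adjacent_intervals h0 h1,
    intervalIntegral_zero_ld hld hdu, intervalIntegral_ld_lu hb.ne hld hdu,
    setIntegral_Ioi_lu hb hld hdu]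
  have hL : lu - ld ≠ 0 := (sub_pos.mpr hdu).ne'
  field_simp
  ring

end limitingDensity

theorem limiting_density_b1_zero (b₂ ld lu ρ₁₂ C₀ : ℝ)
    (hb₂ : b₂ < 0) (hld : 0 < ld) (hdu : ld < lu) (hρ : 0 < ρ₁₂)
    (hC₀ : C₀ = ((lu + ld) / 2 - ρ₁₂ / b₂)⁻¹)
    (f : ℝ → ℝ)
    (hf : f = fun x =>
      if x < 0 then 0
      else if x < ld then C₀
      else if x ≤ lu then
        C₀ * (lu - x) / (lu - ld) +
          C₀ * ρ₁₂ / (b₂ * (lu - ld)) * (exp (b₂ * (x - ld)) - 1)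
      else
        C₀ * ρ₁₂ * (exp (b₂ * (lu - ld)) - 1) / (b₂ * (lu - ld)) *
          exp (b₂ * (x - lu))) :
    (∀ x, 0 ≤ f x) ∧ ∫ x : ℝ, f x = 1 := by
  change f = limitingDensity b₂ ld lu ρ₁₂ C₀ at hf
  subst hf
  have hnorm : 0 < (lu + ld) / 2 - ρ₁₂ / b₂ := by
    have : ρ₁₂ / b₂ < 0 := div_neg_of_pos_of_neg hρ hb₂
    linarith
  refine ⟨limitingDensity.nonneg hdu.le hρ.le (hC₀ ▸ inv_nonneg.mpr hnorm.le), ?_⟩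
  rw [limitingDensity.integral_eq hb₂ hld.le hdu, hC₀, inv_mul_cancel₀ hnorm.ne']
end
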